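/- Let c : ℝ → ℝ² be a smooth 2π-periodic regular curve (c'(θ) ≠ 0 for all θ), with unit tangent v = c'/‖c'‖, unit normal n = J v, arc-length derivative D_s f = f'/‖c'‖, and curvature κ = ⟨D_s v, n⟩. Let k : ℝ → ℝ² be smooth and 2π-periodic, set a := ⟨k, n⟩, and let b : ℝ → ℝ be the unique smooth 2π-periodic function with b(0) = 0 and D_s² b = D_s(a κ). Then h := a n + b v satisfies ⟨D_s² h(θ), v(θ)⟩ + κ(θ) ⟨D_s h(θ), n(θ)⟩ = 0 for all θ and ⟨h(0), v(0)⟩ = 0; moreover k - h = (⟨k, v⟩ - b) v is a pointwise multiple of v. -/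

import Mathlib

open Real Function

/-- Rotation by `π/2` in the plane. -/
noncomputable def Jrot (x : EuclideanSpace ℝ (Fin 2)) : EuclideanSpace ℝ (Fin 2) :=
  (WithLp.equiv 2 (Fin 2 → ℝ)).symm ![-(x 1), x 0]

/-- The unit tangent vector field `v = c'/‖c'‖` of a curve `c`. -/
noncomputable def unitTangent (c : ℝ → EuclideanSpace ℝ (Fin 2)) (θ : ℝ) :
    EuclideanSpace ℝ (Fin 2) :=
  ‖deriv c θ‖⁻¹ • deriv c θ

/-- The unit normal vector field `n = J v` of a curve `c`. -/
noncomputable def unitNormal (c : ℝ → EuclideanSpace ℝ (Fin 2)) (θ : ℝ) :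
    EuclideanSpace ℝ (Fin 2) :=
  Jrot (unitTangent c θ)

/-- The arc-length derivative `D_s f = f'/‖c'‖` along the curve `c`. -/
noncomputable def arcDeriv (c : ℝ → EuclideanSpace ℝ (Fin 2)) {F : Type*}
    [NormedAddCommGroup F] [NormedSpace ℝ F] (f : ℝ → F) (θ : ℝ) : F :=
  ‖deriv c θ‖⁻¹ • deriv f θ

/-- The curvature `κ = ⟨D_s v, n⟩` of a curve `c`. -/
noncomputable def curvature (c : ℝ → EuclideanSpace ℝ (Fin 2)) (θ : ℝ) : ℝ :=
  inner ℝ (arcDeriv c (unitTangent c) θ) (unitNormal c θ)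


lemma Jrot_apply0 (x : EuclideanSpace ℝ (Fin 2)) : Jrot x 0 = -(x 1) := rfl
lemma Jrot_apply1 (x : EuclideanSpace ℝ (Fin 2)) : Jrot x 1 = x 0 := rfl

lemma inner_two (x y : EuclideanSpace ℝ (Fin 2)) :
    (inner ℝ x y : ℝ) = x 0 * y 0 + x 1 * y 1 := by
  simp [PiLp.inner_apply, Fin.sum_univ_two, mul_comm]

lemma inner_Jrot_Jrot (x y : EuclideanSpace ℝ (Fin 2)) :
    (inner ℝ (Jrot x) (Jrot y) : ℝ) = inner ℝ x y := by
  simp [inner_two, Jrot_apply0, Jrot_apply1]; ring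

lemma inner_Jrot_self (x : EuclideanSpace ℝ (Fin 2)) :
    (inner ℝ (Jrot x) x : ℝ) = 0 := by
  simp [inner_two, Jrot_apply0, Jrot_apply1]; ring

noncomputable def Jclm : EuclideanSpace ℝ (Fin 2) →L[ℝ] EuclideanSpace ℝ (Fin 2) :=
  LinearMap.toContinuousLinearMap
  { toFun := Jrot
    map_add' := by
      intro x y; ext i; fin_cases i <;>
        simp [Jrot_apply0, Jrot_apply1, PiLp.add_apply, Fin.mk_zero, Fin.mk_one, add_comm]
    map_smul' := by
      intro m x; ext i; fin_cases i <;>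
        simp [Jrot_apply0, Jrot_apply1, PiLp.smul_apply, Fin.mk_zero, Fin.mk_one] }

lemma Jclm_apply (x : EuclideanSpace ℝ (Fin 2)) : Jclm x = Jrot x := rfl

lemma span_decomp (v w : EuclideanSpace ℝ (Fin 2)) (hv : ‖v‖ = 1) :
    w = (inner ℝ w v : ℝ) • v + (inner ℝ w (Jrot v) : ℝ) • Jrot v := by
  have h1 : v 0 * v 0 + v 1 * v 1 = 1 := by
    have h2 := real_inner_self_eq_norm_sq v
    rw [hv, inner_two] at h2
    simpa using h2
  ext i; fin_cases i <;>
    simp only [inner_two, Jrot_apply0, Jrot_apply1, PiLp.add_apply, PiLp.smul_apply,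
      smul_eq_mul, Fin.mk_zero, Fin.mk_one, Fin.isValue]
  · linear_combination (-(w 0)) * h1
  · linear_combination (-(w 1)) * h1

/-- The projection `P^{Arc⁰}(k) = ⟨k,n⟩ n + b v` of Lemma 3.2 takes values in
`Arc⁰(c)`, and the complement `k - P^{Arc⁰}(k)` is a pointwise multiple of `v`. -/
theorem projection_arc_wellDefined (c : ℝ → EuclideanSpace ℝ (Fin 2))
    (hc : ContDiff ℝ (⊤ : ℕ∞) c) (hcper : Function.Periodic c (2 * π))
    (hreg : ∀ θ : ℝ, deriv c θ ≠ 0)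
    (k : ℝ → EuclideanSpace ℝ (Fin 2))
    (hk : ContDiff ℝ (⊤ : ℕ∞) k) (hkper : Function.Periodic k (2 * π))
    (a : ℝ → ℝ) (hadef : ∀ θ : ℝ, a θ = (inner ℝ (k θ) (unitNormal c θ) : ℝ))
    (b : ℝ → ℝ) (hb : ContDiff ℝ (⊤ : ℕ∞) b) (hbper : Function.Periodic b (2 * π))
    (hb0 : b 0 = 0)
    (hbeq : ∀ θ : ℝ, arcDeriv c (arcDeriv c b) θ =
      arcDeriv c (fun ϑ => a ϑ * curvature c ϑ) θ)
    (h : ℝ → EuclideanSpace ℝ (Fin 2))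
    (hdef : ∀ θ : ℝ, h θ = a θ • unitNormal c θ + b θ • unitTangent c θ) :
    (∀ θ : ℝ,
        (inner ℝ (arcDeriv c (arcDeriv c h) θ) (unitTangent c θ) : ℝ) +
          curvature c θ * (inner ℝ (arcDeriv c h θ) (unitNormal c θ) : ℝ) = 0) ∧
      (inner ℝ (h 0) (unitTangent c 0) : ℝ) = 0 ∧
      ∀ θ : ℝ, k θ - h θ =
        ((inner ℝ (k θ) (unitTangent c θ) : ℝ) - b θ) • unitTangent c θ := by
  -- smoothness setup (downgrade to C^∞)
  have hcs : ContDiff ℝ (⊤ : ℕ∞) c := hc.of_le (by simp)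
  have hks : ContDiff ℝ (⊤ : ℕ∞) k := hk.of_le (by simp)
  have hbs : ContDiff ℝ (⊤ : ℕ∞) b := hb.of_le (by simp)
  have hc' : ContDiff ℝ (⊤ : ℕ∞) (deriv c) := (contDiff_infty_iff_deriv.mp hcs).2
  have hrne : ∀ θ, ‖deriv c θ‖ ≠ 0 := fun θ => norm_ne_zero_iff.mpr (hreg θ)
  have hrcd : ContDiff ℝ (⊤ : ℕ∞) (fun θ => ‖deriv c θ‖) := hc'.norm ℝ hreg
  have hrinv : ContDiff ℝ (⊤ : ℕ∞) (fun θ => ‖deriv c θ‖⁻¹) := hrcd.inv hrne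
  have hvcd : ContDiff ℝ (⊤ : ℕ∞) (unitTangent c) := hrinv.smul hc'
  have hncd : ContDiff ℝ (⊤ : ℕ∞) (unitNormal c) := by
    have : unitNormal c = fun θ => Jclm (unitTangent c θ) := rfl
    rw [this]; exact Jclm.contDiff.comp hvcd
  have hv' : ContDiff ℝ (⊤ : ℕ∞) (deriv (unitTangent c)) :=
    (contDiff_infty_iff_deriv.mp hvcd).2
  have hκcd : ContDiff ℝ (⊤ : ℕ∞) (curvature c) := by
    have : curvature c = fun θ =>
        (inner ℝ ((‖deriv c θ‖⁻¹ : ℝ) • deriv (unitTangent c) θ) (unitNormal c θ) : ℝ) := rfl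
    rw [this]; exact ContDiff.inner ℝ (hrinv.smul hv') hncd
  have hacd : ContDiff ℝ (⊤ : ℕ∞) a := by
    have : a = fun θ => (inner ℝ (k θ) (unitNormal c θ) : ℝ) := funext hadef
    rw [this]; exact ContDiff.inner ℝ hks hncd
  have hhcd : ContDiff ℝ (⊤ : ℕ∞) h := by
    have : h = fun θ => a θ • unitNormal c θ + b θ • unitTangent c θ := funext hdef
    rw [this]; exact (hacd.smul hncd).add (hbs.smul hvcd)
  have hh' : ContDiff ℝ (⊤ : ℕ∞) (deriv h) := (contDiff_infty_iff_deriv.mp hhcd).2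
  have hDh : ContDiff ℝ (⊤ : ℕ∞) (arcDeriv c h) := by
    have : arcDeriv c h = fun θ => ‖deriv c θ‖⁻¹ • deriv h θ := rfl
    rw [this]; exact hrinv.smul hh'
  -- norm of v is 1
  have hvnorm : ∀ θ, ‖unitTangent c θ‖ = 1 := by
    intro θ
    rw [unitTangent, norm_smul, norm_inv, norm_norm, inv_mul_cancel₀ (hrne θ)]
  have hvv : ∀ θ, (inner ℝ (unitTangent c θ) (unitTangent c θ) : ℝ) = 1 := by
    intro θ; rw [real_inner_self_eq_norm_sq, hvnorm θ]; norm_num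
  have hnn : ∀ θ, (inner ℝ (unitNormal c θ) (unitNormal c θ) : ℝ) = 1 := by
    intro θ; rw [unitNormal, inner_Jrot_Jrot]; exact hvv θ
  have hnv : ∀ θ, (inner ℝ (unitNormal c θ) (unitTangent c θ) : ℝ) = 0 := fun θ =>
    inner_Jrot_self _
  have hvn : ∀ θ, (inner ℝ (unitTangent c θ) (unitNormal c θ) : ℝ) = 0 := by
    intro θ; rw [real_inner_comm]; exact hnv θ
  -- differentiability shortcuts
  have dv : ∀ θ, HasDerivAt (unitTangent c) (deriv (unitTangent c) θ) θ :=
    fun θ => ((hvcd.differentiable (by simp)) θ).hasDerivAt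
  have dh : ∀ θ, HasDerivAt h (deriv h θ) θ :=
    fun θ => ((hhcd.differentiable (by simp)) θ).hasDerivAt
  -- Frenet: deriv v = (r * κ) • n
  have frenet : ∀ θ, deriv (unitTangent c) θ =
      (‖deriv c θ‖ * curvature c θ) • unitNormal c θ := by
    intro θ
    have hdec := span_decomp (unitTangent c θ) (deriv (unitTangent c) θ) (hvnorm θ)
    have hzero : (inner ℝ (deriv (unitTangent c) θ) (unitTangent c θ) : ℝ) = 0 := by
      have hconst : (fun t => (inner ℝ (unitTangent c t) (unitTangent c t) : ℝ)) = fun _ => 1 :=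
        funext hvv
      have hd : HasDerivAt (fun t => (inner ℝ (unitTangent c t) (unitTangent c t) : ℝ))
          ((inner ℝ (unitTangent c θ) (deriv (unitTangent c) θ) : ℝ) +
            (inner ℝ (deriv (unitTangent c) θ) (unitTangent c θ) : ℝ)) θ :=
        (dv θ).inner ℝ (dv θ)
      rw [hconst] at hd
      have h2 := (hasDerivAt_const θ (1:ℝ)).unique hd
      rw [real_inner_comm (unitTangent c θ)] at h2
      rw [real_inner_comm]
      linarith
    have hκ : (inner ℝ (deriv (unitTangent c) θ) (unitNormal c θ) : ℝ) =
        ‖deriv c θ‖ * curvature c θ := by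
      rw [curvature, arcDeriv, real_inner_smul_left, ← mul_assoc,
        mul_inv_cancel₀ (hrne θ), one_mul]
    rw [show Jrot (unitTangent c θ) = unitNormal c θ from rfl] at hdec
    rw [hzero, hκ] at hdec
    rw [hdec]
    simp
  -- inner ℝ products of h with v, n
  have hhv : ∀ θ, (inner ℝ (h θ) (unitTangent c θ) : ℝ) = b θ := by
    intro θ
    rw [hdef θ, inner_add_left, real_inner_smul_left, real_inner_smul_left,
      hnv θ, hvv θ]
    ring
  have hhn : ∀ θ, (inner ℝ (h θ) (unitNormal c θ) : ℝ) = a θ := by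
    intro θ
    rw [hdef θ, inner_add_left, real_inner_smul_left, real_inner_smul_left,
      hnn θ, hvn θ]
    ring
  -- ⟨D_s h, v⟩ = D_s b - a κ (pointwise)
  have key1 : ∀ θ, (inner ℝ (arcDeriv c h θ) (unitTangent c θ) : ℝ) =
      ‖deriv c θ‖⁻¹ * deriv b θ - a θ * curvature c θ := by
    intro θ
    have hd : HasDerivAt (fun t => (inner ℝ (h t) (unitTangent c t) : ℝ))
        ((inner ℝ (h θ) (deriv (unitTangent c) θ) : ℝ) +
          (inner ℝ (deriv h θ) (unitTangent c θ) : ℝ)) θ := (dh θ).inner ℝ (dv θ)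
    have hfun : (fun t => (inner ℝ (h t) (unitTangent c t) : ℝ)) = b := funext hhv
    rw [hfun] at hd
    have hb' : deriv b θ = (inner ℝ (h θ) (deriv (unitTangent c) θ) : ℝ) +
        (inner ℝ (deriv h θ) (unitTangent c θ) : ℝ) := hd.deriv
    have hv'h : (inner ℝ (h θ) (deriv (unitTangent c) θ) : ℝ) =
        ‖deriv c θ‖ * curvature c θ * a θ := by
      rw [frenet θ, real_inner_smul_right, hhn θ]
    rw [arcDeriv, real_inner_smul_left]
    rw [hv'h] at hb'
    have hr := hrne θ
    rw [hb']
    field_simp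
    ring
  -- differentiability of pieces
  have hb' : ContDiff ℝ (⊤ : ℕ∞) (deriv b) := (contDiff_infty_iff_deriv.mp hbs).2
  have hDb : ContDiff ℝ (⊤ : ℕ∞) (arcDeriv c b) := by
    have : arcDeriv c b = fun θ => ‖deriv c θ‖⁻¹ • deriv b θ := rfl
    rw [this]; exact hrinv.smul hb'
  have haκ : ContDiff ℝ (⊤ : ℕ∞) (fun θ => a θ * curvature c θ) := hacd.mul hκcd
  -- φ := ⟨D_s h, v⟩ and its derivative vanishes
  set φ : ℝ → ℝ := fun θ => (inner ℝ (arcDeriv c h θ) (unitTangent c θ) : ℝ) with hφdef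
  have hφ : φ = fun θ => arcDeriv c b θ - a θ * curvature c θ := by
    funext θ
    show (inner ℝ (arcDeriv c h θ) (unitTangent c θ) : ℝ) = _
    rw [key1 θ, arcDeriv, smul_eq_mul]
  have hφ0 : ∀ θ, deriv φ θ = 0 := by
    intro θ
    rw [hφ]
    rw [deriv_fun_sub ((hDb.differentiable (by simp)) θ)
      ((haκ.differentiable (by simp)) θ)]
    have h1 := hbeq θ
    rw [arcDeriv, arcDeriv] at h1
    have h2 := smul_right_injective ℝ (inv_ne_zero (hrne θ)) h1
    rw [h2]
    ring
  have dDh : ∀ θ, HasDerivAt (arcDeriv c h) (deriv (arcDeriv c h) θ) θ :=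
    fun θ => ((hDh.differentiable (by simp)) θ).hasDerivAt
  refine ⟨?_, ?_, ?_⟩
  · intro θ
    have hd2 : HasDerivAt φ
        ((inner ℝ (arcDeriv c h θ) (deriv (unitTangent c) θ) : ℝ) +
          (inner ℝ (deriv (arcDeriv c h) θ) (unitTangent c θ) : ℝ)) θ :=
      (dDh θ).inner ℝ (dv θ)
    have h3 : (inner ℝ (arcDeriv c h θ) (deriv (unitTangent c) θ) : ℝ) +
        (inner ℝ (deriv (arcDeriv c h) θ) (unitTangent c θ) : ℝ) = 0 := by
      rw [← hd2.deriv]; exact hφ0 θ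
    have h4 : (inner ℝ (arcDeriv c h θ) (deriv (unitTangent c) θ) : ℝ) =
        ‖deriv c θ‖ * curvature c θ *
          (inner ℝ (arcDeriv c h θ) (unitNormal c θ) : ℝ) := by
      rw [frenet θ, real_inner_smul_right]
    rw [h4] at h3
    have h5 : (inner ℝ (arcDeriv c (arcDeriv c h) θ) (unitTangent c θ) : ℝ) =
        ‖deriv c θ‖⁻¹ * (inner ℝ (deriv (arcDeriv c h) θ) (unitTangent c θ) : ℝ) := by
      rw [arcDeriv, real_inner_smul_left]
    rw [h5]
    have hr := hrne θ
    have h6 : (inner ℝ (deriv (arcDeriv c h) θ) (unitTangent c θ) : ℝ) =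
        -(‖deriv c θ‖ * curvature c θ *
          (inner ℝ (arcDeriv c h θ) (unitNormal c θ) : ℝ)) := by linarith
    rw [h6]
    field_simp
    ring
  · rw [hdef 0, inner_add_left, real_inner_smul_left, real_inner_smul_left,
      hnv 0, hvv 0, hb0]
    ring
  · intro θ
    have hdec := span_decomp (unitTangent c θ) (k θ) (hvnorm θ)
    rw [show Jrot (unitTangent c θ) = unitNormal c θ from rfl, ← hadef θ] at hdec
    rw [hdef θ]
    nth_rewrite 1 [hdec]
    rw [sub_smul]
    abel
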